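/- arXiv:2406.17133 — 2 statements merged into one kernel-verified Lean document; each statement's English description precedes it below -/
import Mathlib

section
/- For a density matrix Q on a d-dimensional Hilbert space, r ∈ (0,1) ∪ (1,∞), and s ≠ 0, the Hu–Ye unified entropy HY_r^s(Q) = (1/((1−r)s))·((Tr Q^r)^s − 1) satisfies 0 ≤ HY_r^s(Q) ≤ (1/((1−r)s))·(d^{(1−r)s} − 1). -/
/-!
Let `p` be the spectrum of `Q`, a probability vector, and `T = ∑ pᵢ ^ r`. For `r < 1`, comparing
termwise `pᵢ ≤ pᵢ ^ r` gives `1 ≤ T`, and Jensen's inequality for the concave `x ↦ x ^ r` at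
uniform weights gives `T ≤ d ^ (1 - r)`; for `r > 1` both inequalities reverse. Since
`x ↦ (x ^ s - 1) / s` is monotone on `(0, ∞)`, the entropy `(T ^ s - 1) / ((1 - r) s)` then lies
between its values `0` at `T = 1` and the bound at `T = d ^ (1 - r)`.
-/

open scoped ComplexOrder Matrix

/-- The Hu–Ye unified entropy of a Hermitian matrix, computed from its eigenvalues. -/
noncomputable def HY {d : ℕ} {Q : Matrix (Fin d) (Fin d) ℂ}
    (hQ : Q.IsHermitian) (r s : ℝ) : ℝ :=
  (1 / ((1 - r) * s)) * ((∑ i, hQ.eigenvalues i ^ r) ^ s - 1)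

open Finset

lemma Matrix.IsHermitian.sum_eigenvalues_eq_re_trace {n 𝕜 : Type*} [Fintype n] [DecidableEq n]
    [RCLike 𝕜] {A : Matrix n n 𝕜} (hA : A.IsHermitian) :
    ∑ i, hA.eigenvalues i = RCLike.re A.trace := by
  simp [hA.trace_eq_sum_eigenvalues]

lemma Real.rpow_sub_one_div_monotoneOn (s : ℝ) :
    MonotoneOn (fun x : ℝ => (x ^ s - 1) / s) (Set.Ioi 0) := by
  intro x hx y _ hxy
  rcases lt_trichotomy s 0 with hs | rfl | hs
  · exact div_le_div_of_nonpos_of_le hs.le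
      (sub_le_sub_right (Real.rpow_le_rpow_of_nonpos hx hxy hs.le) 1)
  · simp
  · exact div_le_div_of_nonneg_right
      (sub_le_sub_right (Real.rpow_le_rpow hx.le hxy hs.le) 1) hs.le

lemma one_div_mul_mul_rpow_sub_one_le {u s x y : ℝ} (hx : 0 < x) (hy : 0 < y)
    (hxy : 0 ≤ u * (y - x)) :
    1 / (u * s) * (x ^ s - 1) ≤ 1 / (u * s) * (y ^ s - 1) := by
  have factor (a : ℝ) : 1 / (u * s) * (a ^ s - 1) = u⁻¹ * ((a ^ s - 1) / s) := by
    rw [one_div, mul_inv, mul_assoc, div_eq_inv_mul]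
  rw [factor, factor]
  rcases lt_trichotomy u 0 with hu | rfl | hu
  · have hyx : y ≤ x := by nlinarith
    exact mul_le_mul_of_nonpos_left (Real.rpow_sub_one_div_monotoneOn s hy hx hyx)
      (inv_nonpos.2 hu.le)
  · simp
  · have hxy' : x ≤ y := by nlinarith
    exact mul_le_mul_of_nonneg_left (Real.rpow_sub_one_div_monotoneOn s hx hy hxy')
      (inv_nonneg.2 hu.le)

section ProbabilityVector

variable {ι : Type*} [Fintype ι] {p : ι → ℝ}

lemma le_one_of_sum_eq_one (hp0 : ∀ i, 0 ≤ p i) (hp1 : ∑ i, p i = 1) (i : ι) : p i ≤ 1 :=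
  hp1 ▸ single_le_sum (fun j _ => hp0 j) (mem_univ i)

lemma sum_rpow_pos (hp0 : ∀ i, 0 ≤ p i) (hp1 : ∑ i, p i = 1) (r : ℝ) : 0 < ∑ i, p i ^ r := by
  obtain ⟨i, -, hi⟩ := exists_lt_of_sum_lt (s := univ) (f := fun _ => (0 : ℝ)) (g := p)
    (by simp [hp1])
  exact (Real.rpow_pos_of_pos hi r).trans_le
    (single_le_sum (fun j _ => Real.rpow_nonneg (hp0 j) r) (mem_univ i))

lemma one_le_sum_rpow (hp0 : ∀ i, 0 ≤ p i) (hp1 : ∑ i, p i = 1) {r : ℝ} (hr : r ≤ 1) :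
    1 ≤ ∑ i, p i ^ r :=
  hp1 ▸ sum_le_sum fun i _ =>
    Real.self_le_rpow_of_le_one (hp0 i) (le_one_of_sum_eq_one hp0 hp1 i) hr

lemma sum_rpow_le_one (hp0 : ∀ i, 0 ≤ p i) (hp1 : ∑ i, p i = 1) {r : ℝ} (hr : 1 ≤ r) :
    ∑ i, p i ^ r ≤ 1 :=
  hp1 ▸ sum_le_sum fun i _ =>
    Real.rpow_le_self_of_le_one (hp0 i) (le_one_of_sum_eq_one hp0 hp1 i) hr

lemma card_pos_of_sum_eq_one (hp1 : ∑ i, p i = 1) : (0 : ℝ) < Fintype.card ι := by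
  have : (univ : Finset ι).Nonempty := nonempty_of_sum_ne_zero (f := p) (by simp [hp1])
  exact_mod_cast Fintype.card_pos_iff.2 (univ_nonempty_iff.1 this)

lemma sum_rpow_le_card_rpow_one_sub (hp0 : ∀ i, 0 ≤ p i) (hp1 : ∑ i, p i = 1) {r : ℝ}
    (hr0 : 0 ≤ r) (hr1 : r ≤ 1) : ∑ i, p i ^ r ≤ (Fintype.card ι : ℝ) ^ (1 - r) := by
  set n : ℝ := (Fintype.card ι : ℝ)
  have hn : 0 < n := card_pos_of_sum_eq_one hp1
  have jensen := (Real.concaveOn_rpow hr0 hr1).le_map_sum (t := univ) (w := fun _ => n⁻¹) (p := p)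
    (fun _ _ => by positivity) (by simp [n, hn.ne']) (fun i _ => hp0 i)
  simp only [smul_eq_mul, ← mul_sum, hp1, mul_one, Real.inv_rpow hn.le] at jensen
  rw [Real.rpow_sub hn, Real.rpow_one, le_div_iff₀ (by positivity)]
  field_simp at jensen
  exact jensen

lemma card_rpow_one_sub_le_sum_rpow (hp0 : ∀ i, 0 ≤ p i) (hp1 : ∑ i, p i = 1) {r : ℝ}
    (hr : 1 ≤ r) : (Fintype.card ι : ℝ) ^ (1 - r) ≤ ∑ i, p i ^ r := by
  set n : ℝ := (Fintype.card ι : ℝ)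
  have hn : 0 < n := card_pos_of_sum_eq_one hp1
  have jensen := (convexOn_rpow hr).map_sum_le (t := univ) (w := fun _ => n⁻¹) (p := p)
    (fun _ _ => by positivity) (by simp [n, hn.ne']) (fun i _ => hp0 i)
  simp only [smul_eq_mul, ← mul_sum, hp1, mul_one, Real.inv_rpow hn.le] at jensen
  rw [Real.rpow_sub hn, Real.rpow_one, div_le_iff₀ (by positivity), mul_comm]
  field_simp at jensen
  exact jensen

end ProbabilityVector

theorem HY_nonneg_and_bounded_general {d : ℕ} {Q : Matrix (Fin d) (Fin d) ℂ}
    (hQ : Q.PosSemidef) (hTr : Q.trace = 1)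
    (r s : ℝ) (hr : r ∈ Set.Ioo (0:ℝ) 1 ∪ Set.Ioi 1) :
    0 ≤ HY hQ.1 r s ∧ HY hQ.1 r s ≤ (1 / ((1 - r) * s)) * ((d : ℝ) ^ ((1 - r) * s) - 1) := by
  set p := hQ.1.eigenvalues
  have hp0 : ∀ i, 0 ≤ p i := hQ.eigenvalues_nonneg
  have hp1 : ∑ i, p i = 1 := by simp [p, hQ.1.sum_eigenvalues_eq_re_trace, hTr]
  have hT : 0 < ∑ i, p i ^ r := sum_rpow_pos hp0 hp1 r
  have hD : (0 : ℝ) < (d : ℝ) ^ (1 - r) :=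
    Real.rpow_pos_of_pos (by simpa using card_pos_of_sum_eq_one hp1) _
  obtain ⟨h_one_T, h_T_D⟩ : 0 ≤ (1 - r) * (∑ i, p i ^ r - 1) ∧
      0 ≤ (1 - r) * ((d : ℝ) ^ (1 - r) - ∑ i, p i ^ r) := by
    have hcard : (Fintype.card (Fin d) : ℝ) = d := by simp
    rcases hr with ⟨hr0, hr1⟩ | hr1
    · have h1 := one_le_sum_rpow hp0 hp1 hr1.le
      have h2 := hcard ▸ sum_rpow_le_card_rpow_one_sub hp0 hp1 hr0.le hr1.le
      have hr : 0 ≤ 1 - r := sub_nonneg.2 hr1.le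
      exact ⟨mul_nonneg hr (sub_nonneg.2 h1), mul_nonneg hr (sub_nonneg.2 h2)⟩
    · have h1 := sum_rpow_le_one hp0 hp1 hr1.le
      have h2 := hcard ▸ card_rpow_one_sub_le_sum_rpow hp0 hp1 hr1.le
      have hr : 1 - r ≤ 0 := sub_nonpos.2 hr1.le
      exact ⟨mul_nonneg_of_nonpos_of_nonpos hr (sub_nonpos.2 h1),
        mul_nonneg_of_nonpos_of_nonpos hr (sub_nonpos.2 h2)⟩
  unfold HY
  rw [Real.rpow_mul (Nat.cast_nonneg d)]
  constructor
  · simpa using one_div_mul_mul_rpow_sub_one_le (s := s) zero_lt_one hT h_one_T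
  · exact one_div_mul_mul_rpow_sub_one_le hT hD h_T_D

theorem HY_nonneg_and_bounded {d : ℕ} {Q : Matrix (Fin d) (Fin d) ℂ}
    (hQ : Q.PosSemidef) (hTr : Q.trace = 1)
    (r s : ℝ) (hr : r ∈ Set.Ioo (0:ℝ) 1 ∪ Set.Ioi 1) (hs : s ≠ 0) :
    0 ≤ HY hQ.1 r s ∧ HY hQ.1 r s ≤ (1 / ((1 - r) * s)) * ((d : ℝ) ^ ((1 - r) * s) - 1) :=
  HY_nonneg_and_bounded_general hQ hTr r s hr
end

section
/- Let r ∈ (0,1), s > 0 with r·s < 1 (or r ≥ 1 with r·s ≥ 1). Then the Hu–Ye unified entropy HY_r^s is concave on density matrices: if Q = Σ_k λ_k Q_k with density matrices Q_k and weights λ_k ∈ [0,1], Σ_k λ_k = 1, then HY_r^s(Q) ≥ Σ_k λ_k HY_r^s(Q_k). -/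
/-!
For `x ≥ 0` write `F x = (∑ i, x i ^ r) ^ s = ‖x‖ᵣ ^ (r * s)`. For `0 < r ≤ 1` the `ℓʳ`
quasi-norm is homogeneous and superadditive (reverse Minkowski), hence concave, so `F` is concave
when also `r * s ≤ 1`; for `1 ≤ r` and `1 ≤ r * s` it is convex by Minkowski.
In an eigenbasis of `Q = ∑ k, w k • Q k` the spectrum of `Q` is `∑ k, w k • c k`, where the
diagonal `c k` of `Q k` is the image of its spectrum under the doubly stochastic matrix
`|W i j|²` of a unitary `W`. Jensen's inequality along the rows of that matrix gives
`F (spec Q k) ≤ F (c k)` and Jensen's inequality for `F` gives `∑ k, w k * F (c k) ≤ F (spec Q)`;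
the convex case is the mirror image, and there the factor `1 / ((1 - r) * s)` is `≤ 0`.
-/

open scoped ComplexOrder Matrix

open Set

section DoublyStochastic

variable {n : Type*} [Fintype n] [DecidableEq n]

theorem ConcaveOn.sum_le_sum_map_mulVec {s : Set ℝ} {f : ℝ → ℝ} (hf : ConcaveOn ℝ s f)
    {P : Matrix n n ℝ} (hP : P ∈ doublyStochastic ℝ n) {x : n → ℝ} (hx : ∀ j, x j ∈ s) :
    ∑ j, f (x j) ≤ ∑ i, f ((P *ᵥ x) i) :=
  calc ∑ j, f (x j) = ∑ j, (∑ i, P i j) • f (x j) := by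
        simp only [sum_col_of_mem_doublyStochastic hP, one_smul]
    _ = ∑ i, ∑ j, P i j • f (x j) := by
        simp only [Finset.sum_smul]
        exact Finset.sum_comm
    _ ≤ ∑ i, f ((P *ᵥ x) i) := Finset.sum_le_sum fun i _ =>
        hf.le_map_sum (fun j _ => nonneg_of_mem_doublyStochastic hP)
          (sum_row_of_mem_doublyStochastic hP i) (fun j _ => hx j)

theorem ConvexOn.sum_map_mulVec_le {s : Set ℝ} {f : ℝ → ℝ} (hf : ConvexOn ℝ s f)
    {P : Matrix n n ℝ} (hP : P ∈ doublyStochastic ℝ n) {x : n → ℝ} (hx : ∀ j, x j ∈ s) :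
    ∑ i, f ((P *ᵥ x) i) ≤ ∑ j, f (x j) := by
  simpa only [Pi.neg_apply, Finset.sum_neg_distrib, neg_le_neg_iff] using
    hf.neg.sum_le_sum_map_mulVec hP hx

end DoublyStochastic

section Composition

variable {E : Type*} [AddCommGroup E] [Module ℝ E] {s : Set E} {t : Set ℝ} {f : E → ℝ}
  {g : ℝ → ℝ}

theorem ConcaveOn.comp_of_mapsTo (hg : ConcaveOn ℝ t g) (hf : ConcaveOn ℝ s f)
    (hg_mono : MonotoneOn g t) (hst : MapsTo f s t) : ConcaveOn ℝ s (g ∘ f) :=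
  ⟨hf.1, fun _ hx _ hy _ _ ha hb hab => (hg.2 (hst hx) (hst hy) ha hb hab).trans <|
    hg_mono (hg.1 (hst hx) (hst hy) ha hb hab) (hst (hf.1 hx hy ha hb hab))
      (hf.2 hx hy ha hb hab)⟩

theorem ConvexOn.comp_of_mapsTo (hg : ConvexOn ℝ t g) (hf : ConvexOn ℝ s f)
    (hg_mono : MonotoneOn g t) (hst : MapsTo f s t) : ConvexOn ℝ s (g ∘ f) :=
  ⟨hf.1, fun _ hx _ hy _ _ ha hb hab => (hg_mono (hst (hf.1 hx hy ha hb hab))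
    (hg.1 (hst hx) (hst hy) ha hb hab) (hf.2 hx hy ha hb hab)).trans <|
      hg.2 (hst hx) (hst hy) ha hb hab⟩

theorem concaveOn_of_superadditive (hs : Convex ℝ s)
    (hs_smul : ∀ x ∈ s, ∀ a : ℝ, 0 ≤ a → a • x ∈ s)
    (hf_smul : ∀ x ∈ s, ∀ a : ℝ, 0 ≤ a → f (a • x) = a * f x)
    (hf_add : ∀ x ∈ s, ∀ y ∈ s, f x + f y ≤ f (x + y)) : ConcaveOn ℝ s f :=
  ⟨hs, fun x hx y hy a b ha hb _ => by
    simpa only [smul_eq_mul, hf_smul x hx a ha, hf_smul y hy b hb] using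
      hf_add _ (hs_smul x hx a ha) _ (hs_smul y hy b hb)⟩

theorem convexOn_of_subadditive (hs : Convex ℝ s)
    (hs_smul : ∀ x ∈ s, ∀ a : ℝ, 0 ≤ a → a • x ∈ s)
    (hf_smul : ∀ x ∈ s, ∀ a : ℝ, 0 ≤ a → f (a • x) = a * f x)
    (hf_add : ∀ x ∈ s, ∀ y ∈ s, f (x + y) ≤ f x + f y) : ConvexOn ℝ s f :=
  ⟨hs, fun x hx y hy a b ha hb _ => by
    simpa only [smul_eq_mul, hf_smul x hx a ha, hf_smul y hy b hb] using
      hf_add _ (hs_smul x hx a ha) _ (hs_smul y hy b hb)⟩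

end Composition

section PNorm

variable {ι : Type*} [Fintype ι] {p : ℝ} {x y : ι → ℝ}

noncomputable def pNorm (p : ℝ) (x : ι → ℝ) : ℝ := (∑ i, x i ^ p) ^ p⁻¹

lemma sum_rpow_nonneg (hx : 0 ≤ x) (p : ℝ) : 0 ≤ ∑ i, x i ^ p :=
  Finset.sum_nonneg fun i _ => Real.rpow_nonneg (hx i) p

lemma pNorm_nonneg (hx : 0 ≤ x) : 0 ≤ pNorm p x :=
  Real.rpow_nonneg (sum_rpow_nonneg hx p) _

lemma pNorm_rpow (hp : p ≠ 0) (hx : 0 ≤ x) : pNorm p x ^ p = ∑ i, x i ^ p :=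
  Real.rpow_inv_rpow (sum_rpow_nonneg hx p) hp

lemma pNorm_smul (hp : p ≠ 0) {a : ℝ} (ha : 0 ≤ a) (hx : 0 ≤ x) :
    pNorm p (a • x) = a * pNorm p x := by
  simp only [pNorm, Pi.smul_apply, smul_eq_mul, Real.mul_rpow ha (hx _), ← Finset.mul_sum]
  rw [Real.mul_rpow (Real.rpow_nonneg ha p) (sum_rpow_nonneg hx p), Real.rpow_rpow_inv ha hp]

lemma pNorm_mono (hp : 0 < p) (hx : 0 ≤ x) (hxy : x ≤ y) : pNorm p x ≤ pNorm p y := by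
  unfold pNorm
  gcongr with i
  · exact sum_rpow_nonneg hx p
  · exact hx i
  · exact hxy i

lemma pNorm_add_le (hp : 1 ≤ p) (hx : 0 ≤ x) (hy : 0 ≤ y) :
    pNorm p (x + y) ≤ pNorm p x + pNorm p y := by
  simpa only [pNorm, one_div, Pi.add_apply] using
    Real.Lp_add_le_of_nonneg Finset.univ hp (fun i _ => hx i) (fun i _ => hy i)

lemma concaveOn_sum_rpow (hp0 : 0 ≤ p) (hp1 : p ≤ 1) :
    ConcaveOn ℝ (Ici (0 : ι → ℝ)) fun x => ∑ i, x i ^ p := by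
  refine ⟨convex_Ici 0, fun x hx y hy a b ha hb hab => ?_⟩
  simp only [smul_eq_mul, Finset.mul_sum, ← Finset.sum_add_distrib, Pi.add_apply, Pi.smul_apply]
  exact Finset.sum_le_sum fun i _ =>
    (Real.concaveOn_rpow hp0 hp1).2 (mem_Ici.2 (hx i)) (mem_Ici.2 (hy i)) ha hb hab

lemma pNorm_add_le_pNorm_add (hp0 : 0 < p) (hp1 : p ≤ 1) (hx : 0 ≤ x) (hy : 0 ≤ y) :
    pNorm p x + pNorm p y ≤ pNorm p (x + y) := by
  obtain hA | hA := (pNorm_nonneg (p := p) hx).eq_or_lt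
  · rw [← hA, zero_add]
    exact pNorm_mono hp0 hy (le_add_of_nonneg_left hx)
  obtain hB | hB := (pNorm_nonneg (p := p) hy).eq_or_lt
  · rw [← hB, add_zero]
    exact pNorm_mono hp0 hx (le_add_of_nonneg_right hy)
  have unit_sphere : ∀ {z : ι → ℝ} (hz : 0 ≤ z) (hz0 : 0 < pNorm p z),
      ∑ i, ((pNorm p z)⁻¹ • z) i ^ p = 1 := fun hz hz0 => by
    rw [← pNorm_rpow hp0.ne' (smul_nonneg (inv_nonneg.2 hz0.le) hz),
      pNorm_smul hp0.ne' (inv_nonneg.2 hz0.le) hz, inv_mul_cancel₀ hz0.ne', Real.one_rpow]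
  have hxA := unit_sphere hx hA
  have hyB := unit_sphere hy hB
  set A := pNorm p x
  set B := pNorm p y
  -- `x + y` is `A + B` times a convex combination of the unit vectors `x / A` and `y / B`
  have hxy : x + y = (A + B) • ((A / (A + B)) • (A⁻¹ • x) + (B / (A + B)) • (B⁻¹ • y)) := by
    ext i
    simp only [Pi.add_apply, Pi.smul_apply, smul_eq_mul]
    field_simp [hA.ne', hB.ne']
  have hcomb : 1 ≤ ∑ i, ((A / (A + B)) • (A⁻¹ • x) + (B / (A + B)) • (B⁻¹ • y)) i ^ p := by
    have hAB : 0 < A + B := by positivity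
    have := (concaveOn_sum_rpow hp0.le hp1).2
      (smul_nonneg (inv_nonneg.2 hA.le) hx) (smul_nonneg (inv_nonneg.2 hB.le) hy)
      (div_nonneg hA.le hAB.le) (div_nonneg hB.le hAB.le) (by field_simp)
    simp only [hxA, hyB, smul_eq_mul, mul_one] at this
    rwa [← add_div, div_self hAB.ne'] at this
  rw [hxy, pNorm_smul hp0.ne' (by positivity) (by positivity)]
  exact le_mul_of_one_le_right (by positivity) (Real.one_le_rpow hcomb (by positivity))

lemma concaveOn_pNorm (hp0 : 0 < p) (hp1 : p ≤ 1) : ConcaveOn ℝ (Ici (0 : ι → ℝ)) (pNorm p) :=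
  concaveOn_of_superadditive (convex_Ici 0) (fun _ hx _ ha => mem_Ici.2 (smul_nonneg ha hx))
    (fun _ hx _ ha => pNorm_smul hp0.ne' ha hx)
    (fun _ hx _ hy => pNorm_add_le_pNorm_add hp0 hp1 hx hy)

lemma convexOn_pNorm (hp : 1 ≤ p) : ConvexOn ℝ (Ici (0 : ι → ℝ)) (pNorm p) :=
  convexOn_of_subadditive (convex_Ici 0) (fun _ hx _ ha => mem_Ici.2 (smul_nonneg ha hx))
    (fun _ hx _ ha => pNorm_smul (by positivity) ha hx)
    (fun _ hx _ hy => pNorm_add_le hp hx hy)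

lemma pNorm_rpow_mul (hp : p ≠ 0) (hx : 0 ≤ x) (s : ℝ) :
    pNorm p x ^ (p * s) = (∑ i, x i ^ p) ^ s := by
  rw [Real.rpow_mul (pNorm_nonneg hx), pNorm_rpow hp hx]

lemma concaveOn_sum_rpow_rpow {r s : ℝ} (hr0 : 0 < r) (hr1 : r ≤ 1) (hs : 0 ≤ s)
    (hrs : r * s ≤ 1) : ConcaveOn ℝ (Ici (0 : ι → ℝ)) fun x => (∑ i, x i ^ r) ^ s := by
  have hrs0 : 0 ≤ r * s := by positivity
  refine ((Real.concaveOn_rpow hrs0 hrs).comp_of_mapsTo (concaveOn_pNorm hr0 hr1)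
    (Real.monotoneOn_rpow_Ici_of_exponent_nonneg hrs0) fun _ hx => pNorm_nonneg hx).congr ?_
  exact fun x hx => pNorm_rpow_mul hr0.ne' hx s

lemma convexOn_sum_rpow_rpow {r s : ℝ} (hr : 1 ≤ r) (hrs : 1 ≤ r * s) :
    ConvexOn ℝ (Ici (0 : ι → ℝ)) fun x => (∑ i, x i ^ r) ^ s := by
  refine ((convexOn_rpow hrs).comp_of_mapsTo (convexOn_pNorm hr)
    (Real.monotoneOn_rpow_Ici_of_exponent_nonneg (by positivity))
    fun _ hx => pNorm_nonneg hx).congr ?_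
  exact fun x hx => pNorm_rpow_mul (by positivity) hx s

end PNorm

namespace Matrix

lemma PosSemidef.re_star_mul_mul_apply_self_nonneg {n : Type*} [Fintype n] {A : Matrix n n ℂ}
    (hA : A.PosSemidef) (U : Matrix n n ℂ) (i : n) : 0 ≤ ((star U * A * U) i i).re :=
  (Complex.nonneg_iff.1 (hA.conjTranspose_mul_mul_same U).diag_nonneg).1

variable {n κ : Type*} [Fintype n] [DecidableEq n] [Fintype κ]

lemma normSq_mem_doublyStochastic {U : Matrix n n ℂ} (hU : U ∈ unitaryGroup n ℂ) :
    of (fun i j => Complex.normSq (U i j)) ∈ doublyStochastic ℝ n := by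
  refine mem_doublyStochastic_iff_sum.mpr ⟨fun i j => Complex.normSq_nonneg _, fun i => ?_,
    fun j => ?_⟩
  · have h := congr_fun₂ (mem_unitaryGroup_iff.mp hU) i i
    simp only [mul_apply, star_apply, one_apply_eq, Complex.star_def, Complex.mul_conj] at h
    exact_mod_cast h
  · have h := congr_fun₂ (mem_unitaryGroup_iff'.mp hU) j j
    simp only [mul_apply, star_apply, one_apply_eq, Complex.star_def,
      ← Complex.normSq_eq_conj_mul_self] at h
    exact_mod_cast h

lemma mul_diagonal_mul_star_apply_self (W : Matrix n n ℂ) (d : n → ℝ) (i : n) :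
    (W * diagonal (RCLike.ofReal ∘ d : n → ℂ) * star W) i i =
      ((of fun i j => Complex.normSq (W i j)) *ᵥ d) i := by
  rw [mul_apply, mulVec, dotProduct]
  push_cast
  refine Finset.sum_congr rfl fun j _ => ?_
  simp only [mul_diagonal, star_apply, of_apply, Function.comp_apply, Complex.star_def,
    Complex.normSq_eq_conj_mul_self, RCLike.ofReal_eq_complex_ofReal]
  ring

namespace IsHermitian

variable {A : Matrix n n ℂ} (hA : A.IsHermitian)

lemma star_eigenvectorUnitary_mul_mul_apply_self (i : n) :
    (star (hA.eigenvectorUnitary : Matrix n n ℂ) * A * hA.eigenvectorUnitary) i i =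
      hA.eigenvalues i := by
  have h := hA.conjStarAlgAut_star_eigenvectorUnitary
  rw [Unitary.conjStarAlgAut_apply, Unitary.coe_star, star_star] at h
  simp [h]

lemma star_mul_mul_apply_self (U : Matrix n n ℂ) (i : n) :
    (star U * A * U) i i =
      ((of fun i j => Complex.normSq ((star U * hA.eigenvectorUnitary) i j)) *ᵥ
        hA.eigenvalues) i := by
  rw [← mul_diagonal_mul_star_apply_self]
  conv_lhs => rw [hA.spectral_theorem, Unitary.conjStarAlgAut_apply]
  simp only [star_mul, star_star, Matrix.mul_assoc]

lemma sum_map_eigenvalues_le_sum_map_diag {s : Set ℝ} {f : ℝ → ℝ} (hf : ConcaveOn ℝ s f)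
    (hs : ∀ j, hA.eigenvalues j ∈ s) {U : Matrix n n ℂ} (hU : U ∈ unitaryGroup n ℂ) :
    ∑ j, f (hA.eigenvalues j) ≤ ∑ i, f ((star U * A * U) i i).re := by
  simp only [hA.star_mul_mul_apply_self, Complex.ofReal_re]
  exact hf.sum_le_sum_map_mulVec (normSq_mem_doublyStochastic
    (mul_mem (Unitary.star_mem hU) hA.eigenvectorUnitary.2)) hs

lemma sum_map_diag_le_sum_map_eigenvalues {s : Set ℝ} {f : ℝ → ℝ} (hf : ConvexOn ℝ s f)
    (hs : ∀ j, hA.eigenvalues j ∈ s) {U : Matrix n n ℂ} (hU : U ∈ unitaryGroup n ℂ) :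
    ∑ i, f ((star U * A * U) i i).re ≤ ∑ j, f (hA.eigenvalues j) := by
  simp only [hA.star_mul_mul_apply_self, Complex.ofReal_re]
  exact hf.sum_map_mulVec_le (normSq_mem_doublyStochastic
    (mul_mem (Unitary.star_mem hU) hA.eigenvectorUnitary.2)) hs

lemma eigenvalues_eq_sum_smul_diag (Qk : κ → Matrix n n ℂ) (w : κ → ℝ)
    (hQ : (∑ k, (w k : ℂ) • Qk k).IsHermitian) :
    hQ.eigenvalues = ∑ k, w k • fun i =>
      ((star (hQ.eigenvectorUnitary : Matrix n n ℂ) * Qk k * hQ.eigenvectorUnitary) i i).re := by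
  ext i
  have h := congrArg Complex.re (hQ.star_eigenvectorUnitary_mul_mul_apply_self i)
  simp only [Matrix.mul_sum, Matrix.sum_mul, Matrix.mul_smul, Matrix.smul_mul, Matrix.sum_apply,
    Matrix.smul_apply, Complex.re_sum, Complex.ofReal_re] at h
  simpa [Finset.sum_apply] using h.symm

end IsHermitian

theorem sum_mul_sum_rpow_rpow_eigenvalues_le {r s : ℝ} (hr0 : 0 < r) (hr1 : r ≤ 1) (hs : 0 ≤ s)
    (hrs : r * s ≤ 1) (Qk : κ → Matrix n n ℂ) (hQk : ∀ k, (Qk k).PosSemidef) (w : κ → ℝ)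
    (hw0 : ∀ k, 0 ≤ w k) (hw1 : ∑ k, w k = 1) (hQ : (∑ k, (w k : ℂ) • Qk k).IsHermitian) :
    ∑ k, w k * (∑ j, (hQk k).1.eigenvalues j ^ r) ^ s ≤ (∑ i, hQ.eigenvalues i ^ r) ^ s := by
  set U : Matrix n n ℂ := (hQ.eigenvectorUnitary : Matrix n n ℂ)
  set c : κ → n → ℝ := fun k i => ((star U * Qk k * U) i i).re
  have hc0 : ∀ k, 0 ≤ c k := fun k => (hQk k).re_star_mul_mul_apply_self_nonneg U
  have peierls : ∀ k, ∑ j, (hQk k).1.eigenvalues j ^ r ≤ ∑ i, c k i ^ r := fun k =>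
    (hQk k).1.sum_map_eigenvalues_le_sum_map_diag (Real.concaveOn_rpow hr0.le hr1)
      (fun j => (hQk k).eigenvalues_nonneg j) hQ.eigenvectorUnitary.2
  calc ∑ k, w k * (∑ j, (hQk k).1.eigenvalues j ^ r) ^ s
      ≤ ∑ k, w k * (∑ i, c k i ^ r) ^ s := by
        gcongr ∑ k, _ * ?_ ^ s with k
        · exact hw0 k
        · exact sum_rpow_nonneg (fun j => (hQk k).eigenvalues_nonneg j) r
        · exact peierls k
    _ ≤ (∑ i, (∑ k, w k • c k) i ^ r) ^ s :=
        (concaveOn_sum_rpow_rpow hr0 hr1 hs hrs).le_map_sum (fun k _ => hw0 k) hw1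
          (fun k _ => hc0 k)
    _ = (∑ i, hQ.eigenvalues i ^ r) ^ s := by rw [hQ.eigenvalues_eq_sum_smul_diag]

theorem sum_rpow_rpow_eigenvalues_le_sum_mul {r s : ℝ} (hr : 1 ≤ r) (hrs : 1 ≤ r * s)
    (Qk : κ → Matrix n n ℂ) (hQk : ∀ k, (Qk k).PosSemidef) (w : κ → ℝ)
    (hw0 : ∀ k, 0 ≤ w k) (hw1 : ∑ k, w k = 1) (hQ : (∑ k, (w k : ℂ) • Qk k).IsHermitian) :
    (∑ i, hQ.eigenvalues i ^ r) ^ s ≤ ∑ k, w k * (∑ j, (hQk k).1.eigenvalues j ^ r) ^ s := by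
  set U : Matrix n n ℂ := (hQ.eigenvectorUnitary : Matrix n n ℂ)
  set c : κ → n → ℝ := fun k i => ((star U * Qk k * U) i i).re
  have hs : 0 ≤ s := by nlinarith
  have hc0 : ∀ k, 0 ≤ c k := fun k => (hQk k).re_star_mul_mul_apply_self_nonneg U
  have peierls : ∀ k, ∑ i, c k i ^ r ≤ ∑ j, (hQk k).1.eigenvalues j ^ r := fun k =>
    (hQk k).1.sum_map_diag_le_sum_map_eigenvalues (convexOn_rpow hr)
      (fun j => (hQk k).eigenvalues_nonneg j) hQ.eigenvectorUnitary.2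
  calc (∑ i, hQ.eigenvalues i ^ r) ^ s = (∑ i, (∑ k, w k • c k) i ^ r) ^ s := by
        rw [hQ.eigenvalues_eq_sum_smul_diag]
    _ ≤ ∑ k, w k * (∑ i, c k i ^ r) ^ s :=
        (convexOn_sum_rpow_rpow hr hrs).map_sum_le (fun k _ => hw0 k) hw1 (fun k _ => hc0 k)
    _ ≤ ∑ k, w k * (∑ j, (hQk k).1.eigenvalues j ^ r) ^ s := by
        gcongr ∑ k, _ * ?_ ^ s with k
        · exact hw0 k
        · exact sum_rpow_nonneg (hc0 k) r
        · exact peierls k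

end Matrix

theorem HY_concave_general {d m : ℕ} (r s : ℝ)
    (hrs : (r ∈ Set.Ioo (0:ℝ) 1 ∧ 0 < s ∧ r * s < 1) ∨ (1 ≤ r ∧ 1 ≤ r * s))
    (Qk : Fin m → Matrix (Fin d) (Fin d) ℂ)
    (hQk : ∀ k, (Qk k).PosSemidef)
    (w : Fin m → ℝ) (hw : ∀ k, w k ∈ Set.Icc (0:ℝ) 1) (hw1 : ∑ k, w k = 1)
    (hQ : (∑ k, (w k : ℂ) • Qk k).PosSemidef) :
    HY hQ.1 r s ≥ ∑ k, w k * HY (hQk k).1 r s := by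
  have hw0 : ∀ k, 0 ≤ w k := fun k => (hw k).1
  set C := 1 / ((1 - r) * s)
  have hmix : ∑ k, w k * HY (hQk k).1 r s =
      C * (∑ k, w k * (∑ j, (hQk k).1.eigenvalues j ^ r) ^ s - 1) := by
    rw [mul_sub, Finset.mul_sum, ← hw1, Finset.mul_sum, ← Finset.sum_sub_distrib]
    exact Finset.sum_congr rfl fun k _ => by rw [HY]; ring
  rw [ge_iff_le, hmix, HY]
  rcases hrs with ⟨⟨hr0, hr1⟩, hs, hrs⟩ | ⟨hr1, hrs⟩
  · have hC : 0 ≤ C := one_div_nonneg.2 (mul_nonneg (by linarith) hs.le)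
    gcongr
    exact Matrix.sum_mul_sum_rpow_rpow_eigenvalues_le hr0 hr1.le hs.le hrs.le Qk hQk w hw0 hw1
      hQ.1
  · have hC : C ≤ 0 := one_div_nonpos.2 (mul_nonpos_of_nonpos_of_nonneg (by linarith)
      (by nlinarith))
    refine mul_le_mul_of_nonpos_left (sub_le_sub_right ?_ 1) hC
    exact Matrix.sum_rpow_rpow_eigenvalues_le_sum_mul hr1 hrs Qk hQk w hw0 hw1 hQ.1

theorem HY_concave {d m : ℕ} (r s : ℝ)
    (hrs : (r ∈ Set.Ioo (0:ℝ) 1 ∧ 0 < s ∧ r * s < 1) ∨ (1 ≤ r ∧ 1 ≤ r * s))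
    (Qk : Fin m → Matrix (Fin d) (Fin d) ℂ)
    (hQk : ∀ k, (Qk k).PosSemidef) (hTrk : ∀ k, (Qk k).trace = 1)
    (w : Fin m → ℝ) (hw : ∀ k, w k ∈ Set.Icc (0:ℝ) 1) (hw1 : ∑ k, w k = 1)
    (hQ : (∑ k, (w k : ℂ) • Qk k).PosSemidef) :
    HY hQ.1 r s ≥ ∑ k, w k * HY (hQk k).1 r s :=
  HY_concave_general r s hrs Qk hQk w hw hw1 hQ
end
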